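/- The set S_{1≤3} = {x ∈ S² : x₁ ≤ x₃} is invariant under V_13, i.e., V_13(S_{1≤3}) ⊆ S_{1≤3}, for any a ∈ [0, 1/2]. -/

import Mathlib

/-!
On the simplex `1 - x₁ = x₂ + x₃`, so the coordinates of `V₁₃ x` add up to `(x₁ + x₂ + x₃)² = 1`,
and `V₁₃` preserves the simplex as soon as `0 ≤ a ≤ 1`. The order `x₁ ≤ x₃` is preserved because
`V₁₃(x)₃ - V₁₃(x)₁ = (x₃ - x₁)(x₃ + x₁) + 2(1 - 2a) x₁(1 - x₁)`, where both terms are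
nonnegative when `a ≤ 1/2`.
-/

def V13 (a : ℝ) (p : ℝ × ℝ × ℝ) : ℝ × ℝ × ℝ :=
  (p.1^2 + 2*a*p.1*(1-p.1), p.2.1^2 + 2*p.2.1*p.2.2, p.2.2^2 + 2*(1-a)*p.1*(1-p.1))

def S2 : Set (ℝ × ℝ × ℝ) :=
  {p | 0 ≤ p.1 ∧ 0 ≤ p.2.1 ∧ 0 ≤ p.2.2 ∧ p.1 + p.2.1 + p.2.2 = 1}

lemma V13_sum_of_mem_S2 (a : ℝ) {p : ℝ × ℝ × ℝ} (hp : p ∈ S2) :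
    (V13 a p).1 + (V13 a p).2.1 + (V13 a p).2.2 = 1 := by
  obtain ⟨-, -, -, hsum⟩ := hp
  calc (V13 a p).1 + (V13 a p).2.1 + (V13 a p).2.2
      = (p.1 + p.2.1 + p.2.2) ^ 2 + 2 * p.1 * (1 - (p.1 + p.2.1 + p.2.2)) := by
        simp only [V13]; ring
    _ = 1 := by rw [hsum]; norm_num

lemma V13_mem_S2 {a : ℝ} (ha₀ : 0 ≤ a) (ha₁ : a ≤ 1) {p : ℝ × ℝ × ℝ} (hp : p ∈ S2) :
    V13 a p ∈ S2 := by
  have ⟨hx, hy, hz, hsum⟩ := hp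
  have hx' : 0 ≤ 1 - p.1 := by linarith
  refine ⟨?_, ?_, ?_, V13_sum_of_mem_S2 a hp⟩ <;> simp only [V13]
  · have := mul_nonneg (mul_nonneg (mul_nonneg zero_le_two ha₀) hx) hx'
    positivity
  · positivity
  · have := mul_nonneg (mul_nonneg (mul_nonneg zero_le_two (sub_nonneg.2 ha₁)) hx) hx'
    positivity

lemma V13_snd_snd_sub_fst (a : ℝ) (p : ℝ × ℝ × ℝ) :
    (V13 a p).2.2 - (V13 a p).1
      = (p.2.2 - p.1) * (p.2.2 + p.1) + 2 * (1 - 2 * a) * p.1 * (1 - p.1) := by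
  simp only [V13]; ring

lemma V13_fst_le_snd_snd {a : ℝ} (ha : a ≤ 1 / 2) {p : ℝ × ℝ × ℝ} (hp : p ∈ S2)
    (hle : p.1 ≤ p.2.2) : (V13 a p).1 ≤ (V13 a p).2.2 := by
  obtain ⟨hx, hy, hz, hsum⟩ := hp
  have h₁ : 0 ≤ (p.2.2 - p.1) * (p.2.2 + p.1) := mul_nonneg (by linarith) (by linarith)
  have h₂ : 0 ≤ 2 * (1 - 2 * a) * p.1 * (1 - p.1) :=
    mul_nonneg (mul_nonneg (by linarith) hx) (by linarith)
  linarith [V13_snd_snd_sub_fst a p]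

theorem V13_invariant_S13 (a : ℝ) (ha : a ∈ Set.Icc (0:ℝ) (1/2)) :
    V13 a '' {p ∈ S2 | p.1 ≤ p.2.2} ⊆ {p ∈ S2 | p.1 ≤ p.2.2} := by
  rintro _ ⟨p, ⟨hp, hle⟩, rfl⟩
  obtain ⟨ha₀, ha₁⟩ := ha
  exact ⟨V13_mem_S2 ha₀ (by linarith) hp, V13_fst_le_snd_snd ha₁ hp hle⟩
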